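/- Let X ∈ R^{d×p} with d = d1·d2·…·dL and p = p1·p2·…·pL, and let B_l ∈ R^{d_l×p_l} for l = 1,…,L. Then ⟨X, B_L ⊗ B_{L-1} ⊗ … ⊗ B_1⟩ = ((…((X * B_1) * B_2) …) * B_{L-1}) * B_L, where * denotes non-overlapping convolution (with stride equal to kernel size) and the final result is a 1×1 matrix identified with a scalar. -/

import Mathlib

/-- The L-fold Kronecker product B_L ⊗ … ⊗ B_1, realized as a matrix indexed by the
product of the index sets (coordinate k corresponds to factor B_k). -/
def kronFold {L : ℕ} {m n : Fin L → Type} [∀ k, Fintype (m k)] [∀ k, Fintype (n k)]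
    (B : ∀ k, Matrix (m k) (n k) ℝ) : Matrix (∀ k, m k) (∀ k, n k) ℝ :=
  fun i j => ∏ k, B k (i k) (j k)

/-- Frobenius inner product. -/
noncomputable def fro {m n : Type} [Fintype m] [Fintype n] (A B : Matrix m n ℝ) : ℝ :=
  ∑ i, ∑ j, A i j * B i j

/-- One non-overlapping convolution step X * B₁: contract the first coordinate
(i.e. the blocks of size d₁×p₁) of X against B₁. -/
noncomputable def convStep {L : ℕ} {m n : Fin (L + 1) → Type}
    [∀ k, Fintype (m k)] [∀ k, Fintype (n k)]
    (X : Matrix (∀ k, m k) (∀ k, n k) ℝ) (B : Matrix (m 0) (n 0) ℝ) :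
    Matrix (∀ k : Fin L, m k.succ) (∀ k : Fin L, n k.succ) ℝ :=
  fun i j => ∑ a, ∑ b, X (Fin.cons a i) (Fin.cons b j) * B a b

/-- The iterated non-overlapping convolution ((…((X*B_1)*B_2)…)*B_{L-1})*B_L,
a scalar once all coordinates are contracted. -/
noncomputable def convIter : ∀ {L : ℕ} {m n : Fin L → Type}
    [inst1 : ∀ k, Fintype (m k)] [inst2 : ∀ k, Fintype (n k)],
    Matrix (∀ k, m k) (∀ k, n k) ℝ → (∀ k, Matrix (m k) (n k) ℝ) → ℝ
  | 0, _, _, _, _, X, _ => X finZeroElim finZeroElim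
  | _ + 1, _, _, _, _, X, B => convIter (convStep X (B 0)) fun k => B k.succ

theorem Fintype.sum_pi_fin_succ {M : Type*} [AddCommMonoid M] {L : ℕ}
    {α : Fin (L + 1) → Type*} [∀ k, Fintype (α k)] (f : (∀ k, α k) → M) :
    ∑ x, f x = ∑ a, ∑ x : ∀ k : Fin L, α k.succ, f (Fin.cons a x) :=
  (Fintype.sum_equiv (Fin.consEquiv α) _ _ fun _ => rfl).symm.trans (Fintype.sum_prod_type _)

theorem fro_kronFold_zero {m n : Fin 0 → Type} [∀ k, Fintype (m k)] [∀ k, Fintype (n k)]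
    (X : Matrix (∀ k, m k) (∀ k, n k) ℝ) (B : ∀ k, Matrix (m k) (n k) ℝ) :
    fro X (kronFold B) = X finZeroElim finZeroElim := by
  simp only [fro, kronFold, Fintype.sum_unique, Finset.univ_eq_empty, Finset.prod_empty, mul_one]
  congr

theorem fro_kronFold_succ {L : ℕ} {m n : Fin (L + 1) → Type}
    [∀ k, Fintype (m k)] [∀ k, Fintype (n k)]
    (X : Matrix (∀ k, m k) (∀ k, n k) ℝ) (B : ∀ k, Matrix (m k) (n k) ℝ) :
    fro X (kronFold B) = fro (convStep X (B 0)) (kronFold fun k => B k.succ) := by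
  simp only [fro, kronFold, convStep, Finset.sum_mul, Fintype.sum_pi_fin_succ (α := m),
    Fintype.sum_pi_fin_succ (α := n), Fin.prod_univ_succ, Fin.cons_zero, Fin.cons_succ]
  rw [Finset.sum_comm]
  refine Fintype.sum_congr _ _ fun i => ?_
  rw [Finset.sum_comm_cycle]
  simp only [mul_assoc]

/-- ⟨X, B_L ⊗ … ⊗ B_1⟩ equals the iterated non-overlapping convolution
((…((X*B_1)*B_2)…)*B_{L-1})*B_L. -/
theorem stmt_10 {L : ℕ} {m n : Fin L → Type} [∀ k, Fintype (m k)] [∀ k, Fintype (n k)]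
    (X : Matrix (∀ k, m k) (∀ k, n k) ℝ) (B : ∀ k, Matrix (m k) (n k) ℝ) :
    fro X (kronFold B) = convIter X B := by
  induction L with
  | zero => exact fro_kronFold_zero X B
  | succ L ih => rw [fro_kronFold_succ, ih]; rfl
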